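/- Let H := { x ∈ ℝ^4 : x_1 ≥ 0 }, H' := { x ∈ ℝ^4 : 3x_1 ≤ x_2 + x_3 + x_4 } and P := H ∩ H', regarded as a subset of l∞^4. Then P is not hyperconvex (indeed, for p = (0,0,0,0), p' = (0,0,−2,2), p'' = (0,−2,0,2) ∈ P one has B(p,1) ∩ B(p',1) ∩ B(p'',1) ∩ P = ∅ although the pairwise l∞-distances of p, p', p'' are at most 2), and consequently P is not injective. -/

import Mathlib

open Set Metric

/-! Injective spaces are hyperconvex: for radii `r i > 0`, the family `i ↦ x i` is a 1-Lipschitz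
map on the leaves of the star tree with edge lengths `r i`, and a 1-Lipschitz extension sends
the centre of the star into every ball `closedBall (x i) (r i)`.

`P` is not hyperconvex because a point `x` of the three unit balls has `x 1 ≤ -1` (from `p''`),
`x 2 ≤ -1` (from `p'`) and `x 3 ≤ 1` (from `p`), so `x 1 + x 2 + x 3 ≤ -1 < 0 ≤ 3 * x 0`. -/

def IsInjectiveMetricSpace (X : Type) [MetricSpace X] : Prop :=
  ∀ (A B : Type) [MetricSpace A] [MetricSpace B], ∀ (i : A → B) (f : A → X),
    Isometry i → LipschitzWith 1 f →
      ∃ g : B → X, LipschitzWith 1 g ∧ ∀ a, g (i a) = f a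

def IsInjectiveSubset {n : ℕ} (S : Set (Fin n → ℝ)) : Prop :=
  IsInjectiveMetricSpace S

def IsHyperconvex (X : Type) [MetricSpace X] : Prop :=
  ∀ (ι : Type) (x : ι → X) (r : ι → ℝ),
    (∀ i j, dist (x i) (x j) ≤ r i + r j) →
      (⋂ i, {y | dist y (x i) ≤ r i}).Nonempty

section StarMetric

variable {ι : Type} [DecidableEq ι]

/-- The path metric of the star tree with centre `none` and edges of length `r i` to the leaves
`some i`. -/
noncomputable def starDist (r : ι → ℝ) : Option ι → Option ι → ℝ
  | none, none => 0
  | none, some i | some i, none => r i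
  | some i, some j => if i = j then 0 else r i + r j

theorem starDist_self (r : ι → ℝ) (a : Option ι) : starDist r a a = 0 := by
  cases a <;> simp [starDist]

theorem starDist_comm (r : ι → ℝ) (a b : Option ι) : starDist r a b = starDist r b a := by
  cases a <;> cases b <;> simp [starDist, eq_comm, add_comm]

theorem starDist_triangle {r : ι → ℝ} (hr : ∀ i, 0 ≤ r i) (a b c : Option ι) :
    starDist r a c ≤ starDist r a b + starDist r b c := by
  rcases a with _ | i <;> rcases b with _ | j <;> rcases c with _ | k <;>
    simp only [starDist] <;> grind

theorem eq_of_starDist_eq_zero {r : ι → ℝ} (hr : ∀ i, 0 < r i) {a b : Option ι}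
    (h : starDist r a b = 0) : a = b := by
  rcases a with _ | i <;> rcases b with _ | j <;> simp only [starDist] at h <;> grind

noncomputable abbrev starMetricSpace {r : ι → ℝ} (hr : ∀ i, 0 < r i) : MetricSpace (Option ι) where
  dist := starDist r
  dist_self := starDist_self r
  dist_comm := starDist_comm r
  dist_triangle := starDist_triangle fun i => (hr i).le
  eq_of_dist_eq_zero := eq_of_starDist_eq_zero hr

end StarMetric

theorem IsInjectiveMetricSpace.isHyperconvex {X : Type} [MetricSpace X]
    (hX : IsInjectiveMetricSpace X) : IsHyperconvex X := by
  classical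
  intro ι x r hxr
  by_cases hpos : ∀ i, 0 < r i
  · let := starMetricSpace hpos
    let : MetricSpace ι := MetricSpace.induced some (Option.some_injective ι) inferInstance
    have hx : LipschitzWith 1 x := LipschitzWith.of_dist_le_mul fun i j => by
      by_cases hij : i = j
      · simp [hij]
      · change _ ≤ _ * starDist r (some i) (some j)
        simpa [starDist, hij] using hxr i j
    obtain ⟨g, hg, hgx⟩ := hX ι (Option ι) some x (Isometry.of_dist_eq fun _ _ => rfl) hx
    refine ⟨g none, mem_iInter.2 fun i => ?_⟩
    calc dist (g none) (x i) = dist (g none) (g (some i)) := by rw [hgx]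
      _ ≤ dist (none : Option ι) (some i) := by simpa using hg.dist_le_mul none (some i)
      _ = r i := rfl
  · push Not at hpos
    obtain ⟨i₀, hi₀⟩ := hpos
    exact ⟨x i₀, mem_iInter.2 fun i => (hxr i₀ i).trans (by linarith)⟩

theorem IsHyperconvex.closedBall_inter_nonempty {α : Type} [MetricSpace α] {S : Set α}
    (hS : IsHyperconvex S) {a b c : α} (ha : a ∈ S) (hb : b ∈ S) (hc : c ∈ S) {r : ℝ}
    (hab : dist a b ≤ 2 * r) (hac : dist a c ≤ 2 * r) (hbc : dist b c ≤ 2 * r) :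
    (closedBall a r ∩ closedBall b r ∩ closedBall c r ∩ S).Nonempty := by
  have hr : 0 ≤ r := by linarith [dist_nonneg (x := a) (y := b)]
  obtain ⟨y, hy⟩ := hS (Fin 3) ![⟨a, ha⟩, ⟨b, hb⟩, ⟨c, hc⟩] (fun _ => r) (by
    intro i j
    fin_cases i <;> fin_cases j <;> simp [Subtype.dist_eq, dist_comm] <;> linarith)
  simp only [mem_iInter, mem_ofPred_eq, Fin.forall_fin_succ, IsEmpty.forall_iff] at hy
  exact ⟨y, ⟨⟨hy.1, hy.2.1⟩, hy.2.2.1⟩, y.2⟩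

theorem le_add_of_mem_closedBall_pi {ι : Type} [Fintype ι] {x y : ι → ℝ} {r : ℝ}
    (h : x ∈ closedBall y r) (i : ι) : x i ≤ y i + r := by
  have := (dist_le_pi_dist x y i).trans (mem_closedBall.1 h)
  rw [Real.dist_eq, abs_le] at this
  linarith

/-- Example: `P = {x ∈ l∞⁴ : x₁ ≥ 0, 3x₁ ≤ x₂ + x₃ + x₄}` contains the three points
`p, p', p''` with pairwise distances `≤ 2`, yet `B(p,1) ∩ B(p',1) ∩ B(p'',1) ∩ P = ∅`;
hence `P` is neither hyperconvex nor injective. -/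
theorem halfspace_intersection_not_injective (P : Set (Fin 4 → ℝ))
    (hP : P = {x | 0 ≤ x 0 ∧ 3 * x 0 ≤ x 1 + x 2 + x 3})
    (p p' p'' : Fin 4 → ℝ)
    (hp : p = ![0, 0, 0, 0]) (hp' : p' = ![0, 0, -2, 2]) (hp'' : p'' = ![0, -2, 0, 2]) :
    (p ∈ P ∧ p' ∈ P ∧ p'' ∈ P) ∧
      (dist p p' ≤ 2 ∧ dist p p'' ≤ 2 ∧ dist p' p'' ≤ 2) ∧
      closedBall p 1 ∩ closedBall p' 1 ∩ closedBall p'' 1 ∩ P = ∅ ∧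
      ¬ IsHyperconvex ↥P ∧ ¬ IsInjectiveSubset P := by
  have hmem : p ∈ P ∧ p' ∈ P ∧ p'' ∈ P := by
    subst_vars
    simp [Matrix.cons_val]
  have hdist : dist p p' ≤ 2 ∧ dist p p'' ≤ 2 ∧ dist p' p'' ≤ 2 := by
    subst_vars
    simp [dist_pi_le_iff zero_le_two, Fin.forall_fin_succ, Real.dist_eq]
  have hempty : closedBall p 1 ∩ closedBall p' 1 ∩ closedBall p'' 1 ∩ P = ∅ := by
    refine eq_empty_of_forall_notMem ?_
    rintro x ⟨⟨⟨h, h'⟩, h''⟩, hx⟩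
    have h1 := le_add_of_mem_closedBall_pi h'' 1
    have h2 := le_add_of_mem_closedBall_pi h' 2
    have h3 := le_add_of_mem_closedBall_pi h 3
    subst_vars
    simp [Matrix.cons_val] at h1 h2 h3 hx
    linarith
  have hnot : ¬ IsHyperconvex P := fun hconv =>
    (hconv.closedBall_inter_nonempty hmem.1 hmem.2.1 hmem.2.2 (by linarith [hdist.1])
      (by linarith [hdist.2.1]) (by linarith [hdist.2.2])).ne_empty hempty
  exact ⟨hmem, hdist, hempty, hnot, fun hinj => hnot (IsInjectiveMetricSpace.isHyperconvex hinj)⟩
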